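/- For m ∈ {1, 2} and R > 0, define η_m(R) = (tanh(R/2))^{2m} sinh R / ∫₀^R (tanh(r/2))^{2m} sinh r dr. Then the function R ↦ η_m(R) · sinh(R/2) is strictly increasing on (0, +∞). -/

import Mathlib

/-!
Write `f r = tanh (r/2) ^ n * sinh r`. The function is `N R / ∫₀ᴿ f` with `N = f * sinh (·/2)`,
which vanishes at `0`. Since `f' / f = (n + cosh x) / sinh x`, one finds `N' = f φ` with
`φ x = (3 c² + n - 1) / (2 c)`, `c = cosh (x/2)`. Cauchy's mean value theorem gives
`N a / ∫₀ᵃ f = φ c` for some `c < a` and `(N b - N a) / ∫ₐᵇ f = φ d` for some `d > a`, so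
`N b / ∫₀ᵇ f` is a proper weighted mean of these two values and exceeds the first one as soon as
`φ` is strictly increasing. Finally `φ = 3c/2 + (n - 1)/(2c)` increases on `c ≥ 1` when
`n - 1 ≤ 3`, which covers `n = 2m` with `m ≤ 2`.
-/

open Real Set

theorem exists_sub_eq_integral_mul {f N φ : ℝ → ℝ} {a b : ℝ} (hab : a < b) (hf : Continuous f)
    (hf_pos : ∀ x ∈ Ioo a b, 0 < f x) (hN : ContinuousOn N (Icc a b))
    (hN' : ∀ x ∈ Ioo a b, HasDerivAt N (f x * φ x) x) :
    ∃ c ∈ Ioo a b, N b - N a = (∫ r in a..b, f r) * φ c := by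
  have hF : ∀ x, HasDerivAt (fun y => ∫ r in a..y, f r) (f x) x := fun x =>
    intervalIntegral.integral_hasDerivAt_right (hf.intervalIntegrable _ _)
      (hf.stronglyMeasurableAtFilter _ _) hf.continuousAt
  obtain ⟨c, hc, h⟩ := exists_ratio_hasDerivAt_eq_ratio_slope _ f hab
    (fun x _ => (hF x).continuousAt.continuousWithinAt) (fun x _ => hF x) N _ hN hN'
  refine ⟨c, hc, mul_right_cancel₀ (hf_pos c hc).ne' ?_⟩
  simp only [intervalIntegral.integral_same, sub_zero] at h
  linear_combination h

theorem strictMonoOn_div_integral_of_hasDerivAt {f N φ : ℝ → ℝ} (hf : Continuous f)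
    (hf_pos : ∀ x ∈ Ioi 0, 0 < f x) (hN : ContinuousOn N (Ici 0)) (hN0 : N 0 = 0)
    (hN' : ∀ x ∈ Ioi 0, HasDerivAt N (f x * φ x) x) (hφ : StrictMonoOn φ (Ioi 0)) :
    StrictMonoOn (fun R => N R / ∫ r in (0 : ℝ)..R, f r) (Ioi 0) := by
  rintro a (ha : 0 < a) b - hab
  have integral_pos : ∀ {u v : ℝ}, 0 ≤ u → u < v → 0 < ∫ r in u..v, f r := fun hu huv =>
    intervalIntegral.intervalIntegral_pos_of_pos_on (hf.intervalIntegrable _ _)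
      (fun x hx => hf_pos x (hu.trans_lt hx.1)) huv
  obtain ⟨c, hc, hNa⟩ := exists_sub_eq_integral_mul ha hf (fun x hx => hf_pos x hx.1)
    (hN.mono Icc_subset_Ici_self) (fun x hx => hN' x hx.1)
  obtain ⟨d, hd, hNb⟩ := exists_sub_eq_integral_mul hab hf
    (fun x hx => hf_pos x (ha.trans hx.1)) (hN.mono ((Icc_subset_Ici_iff hab.le).2 ha.le))
    (fun x hx => hN' x (ha.trans hx.1))
  rw [hN0, sub_zero] at hNa
  have hsplit : (∫ r in (0 : ℝ)..a, f r) + (∫ r in a..b, f r) = ∫ r in (0 : ℝ)..b, f r :=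
    intervalIntegral.integral_add_adjacent_intervals (hf.intervalIntegrable _ _)
      (hf.intervalIntegrable _ _)
  have hφcd : φ c < φ d := hφ hc.1 (ha.trans hd.1) (hc.2.trans hd.1)
  have hI₀ := integral_pos le_rfl ha
  have hI₁ := integral_pos ha.le hab
  calc N a / ∫ r in (0 : ℝ)..a, f r = φ c := by rw [hNa, mul_div_cancel_left₀ _ hI₀.ne']
    _ < N b / ∫ r in (0 : ℝ)..b, f r := by
      rw [lt_div_iff₀ (hsplit ▸ add_pos hI₀ hI₁), ← hsplit]
      nlinarith [mul_lt_mul_of_pos_left hφcd hI₁]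

theorem hasDerivAt_tanh_half (x : ℝ) :
    HasDerivAt (fun y => tanh (y / 2)) (1 / (2 * cosh (x / 2) ^ 2)) x := by
  have hc : cosh (x / 2) ≠ 0 := (cosh_pos _).ne'
  have hhalf : HasDerivAt (fun y : ℝ => y / 2) (1 / 2) x := (hasDerivAt_id x).div_const 2
  simp only [tanh_eq_sinh_div_cosh]
  refine (hhalf.sinh.div hhalf.cosh hc).congr_deriv ?_
  field_simp
  linear_combination cosh_sq (x / 2)

theorem hasDerivAt_tanh_half_pow (n : ℕ) {x : ℝ} (hx : x ≠ 0) :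
    HasDerivAt (fun y => tanh (y / 2) ^ n) (n * tanh (x / 2) ^ n / sinh x) x := by
  refine ((hasDerivAt_tanh_half x).pow n).congr_deriv ?_
  obtain ⟨y, rfl⟩ : ∃ y, x = 2 * y := ⟨x / 2, by ring⟩
  have hs : sinh y ≠ 0 := sinh_ne_zero.2 (right_ne_zero_of_mul hx)
  have hc : cosh y ≠ 0 := (cosh_pos _).ne'
  simp only [mul_div_cancel_left₀ y two_ne_zero, sinh_two_mul, tanh_eq_sinh_div_cosh]
  rcases n with _ | k
  · simp
  · simp only [pow_succ, Nat.add_sub_cancel]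
    field_simp

theorem hasDerivAt_tanh_half_pow_mul_sinh_mul_sinh_half (n : ℕ) {x : ℝ} (hx : x ≠ 0) :
    HasDerivAt (fun y => tanh (y / 2) ^ n * sinh y * sinh (y / 2))
      (tanh (x / 2) ^ n * sinh x * ((3 * cosh (x / 2) ^ 2 + ((n : ℝ) - 1)) / (2 * cosh (x / 2))))
      x := by
  have hhalf : HasDerivAt (fun y : ℝ => y / 2) (1 / 2) x := (hasDerivAt_id x).div_const 2
  refine (((hasDerivAt_tanh_half_pow n hx).mul (hasDerivAt_sinh x)).mul
    hhalf.sinh).congr_deriv ?_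
  obtain ⟨y, rfl⟩ : ∃ y, x = 2 * y := ⟨x / 2, by ring⟩
  have hs : sinh y ≠ 0 := sinh_ne_zero.2 (right_ne_zero_of_mul hx)
  have hc : cosh y ≠ 0 := (cosh_pos _).ne'
  simp only [Pi.mul_apply, mul_div_cancel_left₀ y two_ne_zero, sinh_two_mul, cosh_two_mul,
    tanh_eq_sinh_div_cosh]
  field_simp
  linear_combination -cosh_sq y

theorem strictMonoOn_three_mul_sq_add_div_two_mul {k : ℝ} (hk : k ≤ 3) :
    StrictMonoOn (fun c : ℝ => (3 * c ^ 2 + k) / (2 * c)) (Ici 1) := by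
  rintro c (hc : 1 ≤ c) d (hd : 1 ≤ d) hcd
  rw [div_lt_div_iff₀ (by positivity) (by positivity)]
  nlinarith [mul_pos (sub_pos.2 hcd) (show 0 < 3 * (c * d) - k by nlinarith)]

theorem strictMonoOn_tanh_half_pow_ratio_mul_sinh_half (n : ℕ) (hn : n ≤ 4) :
    StrictMonoOn
      (fun R : ℝ =>
        (tanh (R / 2) ^ n * sinh R / ∫ r in (0 : ℝ)..R, tanh (r / 2) ^ n * sinh r) * sinh (R / 2))
      (Ioi 0) := by
  have hhalf : Continuous fun r : ℝ => r / 2 := continuous_id.div_const 2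
  have hcont : Continuous fun r : ℝ => tanh (r / 2) ^ n * sinh r := by
    simp only [tanh_eq_sinh_div_cosh]
    exact (((continuous_sinh.comp hhalf).div (continuous_cosh.comp hhalf)
      fun _ => (cosh_pos _).ne').pow n).mul continuous_sinh
  have hpos : ∀ x ∈ Ioi (0 : ℝ), 0 < tanh (x / 2) ^ n * sinh x := fun x (hx : 0 < x) => by
    rw [tanh_eq_sinh_div_cosh]
    exact mul_pos (pow_pos (div_pos (sinh_pos_iff.2 (half_pos hx)) (cosh_pos _)) n)
      (sinh_pos_iff.2 hx)
  have hφ : StrictMonoOn (fun x : ℝ => (3 * cosh (x / 2) ^ 2 + ((n : ℝ) - 1)) / (2 * cosh (x / 2)))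
      (Ioi 0) :=
    (strictMonoOn_three_mul_sq_add_div_two_mul
      (by linarith [show (n : ℝ) ≤ 4 by exact_mod_cast hn])).comp
      (cosh_strictMonoOn.comp (fun _ _ _ _ h => by linarith)
        fun x (hx : 0 < x) => mem_Ici.2 (half_pos hx).le)
      fun x _ => one_le_cosh (x / 2)
  simp only [div_mul_eq_mul_div]
  exact strictMonoOn_div_integral_of_hasDerivAt hcont hpos
    (hcont.mul (continuous_sinh.comp hhalf)).continuousOn (by simp)
    (fun x hx => hasDerivAt_tanh_half_pow_mul_sinh_mul_sinh_half n (ne_of_gt hx)) hφ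

theorem eta_sinh_half_strictMono (m : ℕ) (hm : m = 1 ∨ m = 2) :
    StrictMonoOn
      (fun R : ℝ =>
        (Real.tanh (R/2)^(2*m) * Real.sinh R /
          ∫ r in (0:ℝ)..R, Real.tanh (r/2)^(2*m) * Real.sinh r) * Real.sinh (R/2))
      (Set.Ioi 0) :=
  strictMonoOn_tanh_half_pow_ratio_mul_sinh_half (2 * m) (by omega)
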